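/- If T is a defect type of size t that is not a tree, then the number n_T of 2-linked subsets S ⊆ E of Q_d with Q_d²[S] ≅ T satisfies n_T = O(2^d·d^{2t−3}) as d → ∞. -/

import Mathlib

open Finset

/-- The hypercube graph `Q_d` on `{0,1}^d`: vertices adjacent iff they differ in
exactly one coordinate. -/
def cubeGraph (d : ℕ) : SimpleGraph (Fin d → Bool) where
  Adj x y := hammingDist x y = 1
  symm := ⟨fun x y h => by rw [hammingDist_comm]; exact h⟩
  loopless := ⟨fun x h => by simp [hammingDist_self] at h⟩

/-- The distance-2 graph on `{0,1}^d`: vertices adjacent iff Hamming distance 2. -/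
def distTwoGraph (d : ℕ) : SimpleGraph (Fin d → Bool) where
  Adj x y := hammingDist x y = 2
  symm := ⟨fun x y h => by rw [hammingDist_comm]; exact h⟩
  loopless := ⟨fun x h => by simp [hammingDist_self] at h⟩

/-- The even side `E` of the bipartition of `Q_d`. -/
def evenFinset (d : ℕ) : Finset (Fin d → Bool) :=
  Finset.univ.filter fun x => Even (∑ i, if x i then 1 else 0 : ℕ)

/-- The odd side `O` of the bipartition of `Q_d`. -/
def oddFinset (d : ℕ) : Finset (Fin d → Bool) :=
  Finset.univ.filter fun x => ¬ Even (∑ i, if x i then 1 else 0 : ℕ)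

/-- The neighbourhood `N(A)` of a set of vertices in `Q_d`. -/
def nbhd (d : ℕ) (A : Finset (Fin d → Bool)) : Finset (Fin d → Bool) :=
  A.biUnion fun x => Finset.univ.filter fun y => hammingDist x y = 1

/-- `S` is 2-linked: connected in the square of `Q_d` (for `S` inside one side of the
bipartition this is connectivity in the distance-2 graph). -/
def TwoLinked (d : ℕ) (S : Finset (Fin d → Bool)) : Prop :=
  ((distTwoGraph d).induce (S : Set (Fin d → Bool))).Connected


open SimpleGraph

namespace NontreeAux
variable {d : ℕ}

def Δ (u v : Fin d → Bool) : Finset (Fin d) := Finset.univ.filter fun i => u i ≠ v i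

lemma mem_Δ {u v : Fin d → Bool} {i : Fin d} : i ∈ Δ u v ↔ u i ≠ v i := by simp [Δ]

lemma hd_eq_card (u v : Fin d → Bool) : hammingDist u v = (Δ u v).card := rfl

def flip (u : Fin d → Bool) (A : Finset (Fin d)) : Fin d → Bool :=
  fun i => if i ∈ A then !(u i) else u i

lemma flip_Δ (u v : Fin d → Bool) : flip u (Δ u v) = v := by
  funext i
  by_cases h : i ∈ Δ u v
  · rw [mem_Δ] at h
    simp only [flip, if_pos (mem_Δ.2 h)]
    cases hu : u i <;> cases hv : v i <;> simp_all
  · have h2 : u i = v i := by rw [mem_Δ, not_ne_iff] at h; exact h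
    simp only [flip, if_neg h]
    exact h2

lemma Δ_nonempty_of_ne {u v : Fin d → Bool} (h : u ≠ v) : (Δ u v).Nonempty := by
  by_contra hc
  rw [Finset.not_nonempty_iff_eq_empty] at hc
  apply h
  funext i
  by_contra hi
  have : i ∈ Δ u v := mem_Δ.2 hi
  simp [hc] at this

/-- code for a vertex at Hamming distance 2 from a known vertex -/
noncomputable def nCode (u w : Fin d → Bool) : Option (Fin d × Fin d) :=
  if h : (Δ u w).Nonempty then some ((Δ u w).min' h, (Δ u w).max' h) else none

lemma Δ_eq_pair {u w : Fin d → Bool} (h : (Δ u w).card = 2) (hne : (Δ u w).Nonempty) :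
    Δ u w = {(Δ u w).min' hne, (Δ u w).max' hne} := by
  have hlt : (Δ u w).min' hne < (Δ u w).max' hne :=
    Finset.min'_lt_max'_of_card _ (by omega)
  refine (Finset.eq_of_subset_of_card_le ?_ ?_).symm
  · intro x hx
    simp only [Finset.mem_insert, Finset.mem_singleton] at hx
    rcases hx with rfl | rfl
    · exact Finset.min'_mem _ _
    · exact Finset.max'_mem _ _
  · rw [h, Finset.card_pair hlt.ne]

lemma nCode_inj {u w w' : Fin d → Bool} (hw : hammingDist u w = 2)
    (hw' : hammingDist u w' = 2) (hc : nCode u w = nCode u w') : w = w' := by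
  rw [hd_eq_card] at hw hw'
  have hne : (Δ u w).Nonempty := Finset.card_pos.1 (by omega)
  have hne' : (Δ u w').Nonempty := Finset.card_pos.1 (by omega)
  rw [nCode, nCode, dif_pos hne, dif_pos hne'] at hc
  have h1 := (Option.some_injective _ hc)
  have key : Δ u w = Δ u w' := by
    rw [Δ_eq_pair hw hne, Δ_eq_pair hw' hne',
      show (Δ u w).min' hne = (Δ u w').min' hne' from congrArg Prod.fst h1,
      show (Δ u w).max' hne = (Δ u w').max' hne' from congrArg Prod.snd h1]
  rw [← flip_Δ u w, ← flip_Δ u w', key]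


/-- code for the special vertex: `w` at distance 2 from both `u` and `v`, `u ≠ v`. -/
noncomputable def sCode (u v w : Fin d → Bool) : Option (Fin d × Fin 4) :=
  if h1 : ((Δ u w) ∩ (Δ u v)).Nonempty then
    if h2 : ((Δ u w).erase (((Δ u w) ∩ (Δ u v)).min' h1)).Nonempty then
      if h3 : List.idxOf (((Δ u w) ∩ (Δ u v)).min' h1) ((Δ u v).sort (· ≤ ·)) < 4 then
        some (((Δ u w).erase (((Δ u w) ∩ (Δ u v)).min' h1)).min' h2, ⟨_, h3⟩)
      else none
    else none
  else none

lemma sCode_spec {u v w : Fin d → Bool} (huv : u ≠ v)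
    (hw : hammingDist u w = 2) (hvw : hammingDist v w = 2) :
    ∃ (b : Fin d) (i : Fin 4) (hlen : (i : ℕ) < ((Δ u v).sort (· ≤ ·)).length),
      sCode u v w = some (b, i) ∧
      w = flip u {((Δ u v).sort (· ≤ ·)).get ⟨i, hlen⟩, b} := by
  classical
  have hcardA : (Δ u w).card = 2 := by rw [← hd_eq_card]; exact hw
  have hDne : (Δ u v).Nonempty := Δ_nonempty_of_ne huv
  -- intersection nonempty
  have h1 : ((Δ u w) ∩ (Δ u v)).Nonempty := by
    by_contra hc
    rw [Finset.not_nonempty_iff_eq_empty] at hc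
    have hsub : (Δ u w) ∪ (Δ u v) ⊆ Δ v w := by
      intro i hi
      rw [mem_Δ]
      rcases Finset.mem_union.1 hi with hiA | hiD
      · have hiD' : i ∉ Δ u v := by
          intro hd'
          exact Finset.notMem_empty i (hc ▸ Finset.mem_inter.2 ⟨hiA, hd'⟩)
        have h2 : u i = v i := by
          by_contra hne; exact hiD' (mem_Δ.2 hne)
        have h3 : u i ≠ w i := mem_Δ.1 hiA
        rw [← h2]; exact h3
      · have hiA' : i ∉ Δ u w := by
          intro ha'
          exact Finset.notMem_empty i (hc ▸ Finset.mem_inter.2 ⟨ha', hiD⟩)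
        have h2 : u i = w i := by
          by_contra hne; exact hiA' (mem_Δ.2 hne)
        have h3 : u i ≠ v i := mem_Δ.1 hiD
        rw [← h2]; exact fun hx => h3 hx.symm
    have hdisj : Disjoint (Δ u w) (Δ u v) := Finset.disjoint_iff_inter_eq_empty.2 hc
    have hcard : ((Δ u w) ∪ (Δ u v)).card = (Δ u w).card + (Δ u v).card :=
      Finset.card_union_of_disjoint hdisj
    have hle : ((Δ u w) ∪ (Δ u v)).card ≤ (Δ v w).card := Finset.card_le_card hsub
    rw [← hd_eq_card] at hle
    have : 1 ≤ (Δ u v).card := Finset.card_pos.2 hDne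
    omega
  have haA : ((Δ u w) ∩ (Δ u v)).min' h1 ∈ Δ u w :=
    (Finset.mem_inter.1 (Finset.min'_mem _ h1)).1
  have haD : ((Δ u w) ∩ (Δ u v)).min' h1 ∈ Δ u v :=
    (Finset.mem_inter.1 (Finset.min'_mem _ h1)).2
  have h2 : ((Δ u w).erase (((Δ u w) ∩ (Δ u v)).min' h1)).Nonempty := by
    rw [← Finset.card_pos, Finset.card_erase_of_mem haA, hcardA]
    omega
  have hbA : ((Δ u w).erase (((Δ u w) ∩ (Δ u v)).min' h1)).min' h2
      ∈ (Δ u w).erase (((Δ u w) ∩ (Δ u v)).min' h1) := Finset.min'_mem _ h2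
  have hba : ((Δ u w).erase (((Δ u w) ∩ (Δ u v)).min' h1)).min' h2
      ≠ ((Δ u w) ∩ (Δ u v)).min' h1 := Finset.ne_of_mem_erase hbA
  have haMemSort : ((Δ u w) ∩ (Δ u v)).min' h1 ∈ (Δ u v).sort (· ≤ ·) :=
    (Finset.mem_sort _).2 haD
  have hlen : List.idxOf (((Δ u w) ∩ (Δ u v)).min' h1) ((Δ u v).sort (· ≤ ·))
      < ((Δ u v).sort (· ≤ ·)).length := List.idxOf_lt_length_iff.2 haMemSort
  have hDle : (Δ u v).card ≤ 4 := by
    have := hammingDist_triangle u w v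
    rw [hd_eq_card u v, hd_eq_card w v] at this
    have h5 : (Δ w v).card = (Δ v w).card := by
      congr 1; ext i; rw [mem_Δ, mem_Δ]; exact ne_comm
    rw [← hd_eq_card v w] at h5
    omega
  have hlen2 : ((Δ u v).sort (· ≤ ·)).length = (Δ u v).card := Finset.length_sort _
  have h3 : List.idxOf (((Δ u w) ∩ (Δ u v)).min' h1) ((Δ u v).sort (· ≤ ·)) < 4 := by
    omega
  refine ⟨((Δ u w).erase (((Δ u w) ∩ (Δ u v)).min' h1)).min' h2, ⟨_, h3⟩, hlen, ?_, ?_⟩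
  · rw [sCode, dif_pos h1, dif_pos h2, dif_pos h3]
  · have hget : ((Δ u v).sort (· ≤ ·)).get
        ⟨List.idxOf (((Δ u w) ∩ (Δ u v)).min' h1) ((Δ u v).sort (· ≤ ·)), hlen⟩
        = ((Δ u w) ∩ (Δ u v)).min' h1 := List.idxOf_get hlen
    rw [hget]
    have hApair : Δ u w = {((Δ u w) ∩ (Δ u v)).min' h1,
        ((Δ u w).erase (((Δ u w) ∩ (Δ u v)).min' h1)).min' h2} := by
      refine (Finset.eq_of_subset_of_card_le ?_ ?_).symm
      · intro x hx
        rcases Finset.mem_insert.1 hx with rfl | hx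
        · exact haA
        · rw [Finset.mem_singleton] at hx; subst hx
          exact Finset.mem_of_mem_erase hbA
      · rw [hcardA, Finset.card_pair (Ne.symm hba)]
    rw [← hApair, flip_Δ]

lemma sCode_inj {u v w w' : Fin d → Bool} (huv : u ≠ v)
    (hw : hammingDist u w = 2) (hvw : hammingDist v w = 2)
    (hw' : hammingDist u w' = 2) (hvw' : hammingDist v w' = 2)
    (hc : sCode u v w = sCode u v w') : w = w' := by
  obtain ⟨b, i, hlen, hcode, hdec⟩ := sCode_spec huv hw hvw
  obtain ⟨b', i', hlen', hcode', hdec'⟩ := sCode_spec huv hw' hvw'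
  rw [hcode, hcode'] at hc
  have h1 := Option.some_injective _ hc
  have hb : b = b' := congrArg Prod.fst h1
  have hi : i = i' := congrArg Prod.snd h1
  subst hb; subst hi
  rw [hdec, hdec']


def Good (T : SimpleGraph (Fin t)) (l : List (Fin t)) : Prop :=
  ∀ i : Fin l.length, (i : ℕ) ≠ 0 →
    ∃ j : Fin l.length, (j : ℕ) < (i : ℕ) ∧ T.Adj (l.get j) (l.get i)

lemma extend_list (T : SimpleGraph (Fin t)) (hconn : T.Connected) :
    ∀ (n : ℕ) (l : List (Fin t)), t - l.length ≤ n → l ≠ [] → l.Nodup → Good T l →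
    ∃ l', l <+: l' ∧ l'.Nodup ∧ Good T l' ∧ l'.length = t := by
  intro n
  induction n with
  | zero =>
    intro l hn hne hnd hgood
    refine ⟨l, List.prefix_refl l, hnd, hgood, ?_⟩
    have := hnd.length_le_card
    simp only [Fintype.card_fin] at this
    omega
  | succ n ih =>
    intro l hn hne hnd hgood
    by_cases hlt : l.length = t
    · exact ⟨l, List.prefix_refl l, hnd, hgood, hlt⟩
    · have hlen_le : l.length ≤ t := by
        have := hnd.length_le_card; simpa using this
      have hex : ∃ w, w ∉ l := by
        by_contra hc
        push_neg at hc
        have : (Finset.univ : Finset (Fin t)).card ≤ l.toFinset.card :=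
          Finset.card_le_card (fun x _ => List.mem_toFinset.2 (hc x))
        rw [List.toFinset_card_of_nodup hnd] at this
        simp only [Finset.card_univ, Fintype.card_fin] at this
        omega
      obtain ⟨w, hw⟩ := hex
      obtain ⟨u0, hu0⟩ := List.exists_mem_of_ne_nil l hne
      obtain ⟨W⟩ := hconn.preconnected u0 w
      obtain ⟨dart, _, hd1, hd2⟩ := W.exists_boundary_dart {x | x ∈ l} hu0 hw
      simp only [Set.mem_setOf_eq] at hd1 hd2
      have hnd' : (l ++ [dart.snd]).Nodup := by
        rw [List.nodup_append]
        exact ⟨hnd, List.nodup_singleton _, fun a ha b hb hab => hd2 (by rw [← List.mem_singleton.1 hb, ← hab]; exact ha)⟩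
      have hgood' : Good T (l ++ [dart.snd]) := by
        intro i hi0
        have hilen : (i : ℕ) < l.length + 1 := by
          have := i.isLt; simpa using this
        by_cases hi : (i : ℕ) < l.length
        · obtain ⟨j, hj, hadj⟩ := hgood ⟨i, hi⟩ hi0
          have hjlt : (j : ℕ) < (l ++ [dart.snd]).length := by
            have := j.isLt; simp
          refine ⟨⟨j, hjlt⟩, hj, ?_⟩
          have e1 : (l ++ [dart.snd]).get ⟨j, hjlt⟩ = l.get j := by
            rw [List.get_eq_getElem, List.get_eq_getElem]
            exact List.getElem_append_left j.isLt
          have e2 : (l ++ [dart.snd]).get i = l.get ⟨i, hi⟩ := by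
            rw [List.get_eq_getElem, List.get_eq_getElem]
            exact List.getElem_append_left hi
          rw [e1, e2]; exact hadj
        · have hieq : (i : ℕ) = l.length := by omega
          obtain ⟨j, hjget⟩ := List.get_of_mem hd1
          have hjlt : (j : ℕ) < (l ++ [dart.snd]).length := by
            have := j.isLt; simp
          refine ⟨⟨j, hjlt⟩, by show (j:ℕ) < (i:ℕ); have := j.isLt; omega, ?_⟩
          have e1 : (l ++ [dart.snd]).get ⟨j, hjlt⟩ = l.get j := by
            rw [List.get_eq_getElem, List.get_eq_getElem]
            exact List.getElem_append_left j.isLt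
          have e2 : (l ++ [dart.snd]).get i = dart.snd := by
            rw [List.get_eq_getElem, List.getElem_append_right (by omega)]
            simp [hieq]
          rw [e1, e2, hjget]
          exact dart.adj
      obtain ⟨l', hpre, h1, h2, h3⟩ := ih (l ++ [dart.snd])
        (by simp; omega) (by simp) hnd' hgood'
      exact ⟨l', (List.prefix_append l [dart.snd]).trans hpre, h1, h2, h3⟩


lemma support_getElem_eq_getVert {V : Type*} {G : SimpleGraph V} :
    ∀ {u v : V} (p : G.Walk u v) (i : ℕ) (h : i < p.support.length), p.support[i] = p.getVert i := by
  intro u v p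
  induction p with
  | nil => intro i h; simp at h; subst h; rfl
  | cons hadj q ih =>
    intro i h
    cases i with
    | zero => rfl
    | succ i =>
      simp only [SimpleGraph.Walk.support_cons, SimpleGraph.Walk.getVert_cons_succ,
        List.getElem_cons_succ]
      apply ih

set_option maxHeartbeats 400000 in
lemma exists_order (T : SimpleGraph (Fin t)) (hconn : T.Connected) (hcyc : ¬ T.IsAcyclic) :
    ∃ (v : Fin t → Fin t) (p : Fin t → Fin t) (k q : Fin t),
      Function.Injective v ∧
      (∀ i : Fin t, (i : ℕ) ≠ 0 → (p i : ℕ) < (i : ℕ) ∧ T.Adj (v (p i)) (v i)) ∧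
      2 ≤ (k : ℕ) ∧ (q : ℕ) < (k : ℕ) ∧ q ≠ p k ∧ T.Adj (v q) (v k) := by
  classical
  rw [isAcyclic_iff_forall_edge_isBridge] at hcyc
  push_neg at hcyc
  obtain ⟨e, he, hnb⟩ := hcyc
  induction e using Sym2.ind with
  | _ x y =>
  rw [mem_edgeSet] at he
  rw [isBridge_iff] at hnb
  push_neg at hnb
  obtain ⟨W⟩ := hnb
  obtain ⟨p0, hp0⟩ := W.toPath
  clear W
  have hG'le : ∀ a b, (T \ fromEdgeSet {s(x,y)}).Adj a b → T.Adj a b := by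
    intro a b h; rw [sdiff_adj] at h; exact h.1
  have hxy_not : ¬ (T \ fromEdgeSet {s(x,y)}).Adj x y := by
    rw [sdiff_adj]
    push_neg
    intro _
    rw [fromEdgeSet_adj]
    exact ⟨rfl, he.ne⟩
  have hlen2 : 2 ≤ p0.length := by
    rcases Nat.lt_or_ge p0.length 2 with h | h
    · interval_cases h' : p0.length
      · exact absurd (SimpleGraph.Walk.eq_of_length_eq_zero h') he.ne
      · exact absurd (SimpleGraph.Walk.adj_of_length_eq_one h') hxy_not
    · exact h
  have hL0len : p0.support.length = p0.length + 1 := SimpleGraph.Walk.length_support p0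
  have hL0nodup : p0.support.Nodup := hp0.support_nodup
  have hchain : List.IsChain (T \ fromEdgeSet {s(x,y)}).Adj p0.support := p0.isChain_adj_support
  have hchain' : ∀ (i : ℕ) (h : i < p0.support.length - 1),
      T.Adj (p0.support.get ⟨i, by omega⟩) (p0.support.get ⟨i+1, by omega⟩) := by
    intro i h
    exact hG'le _ _ (List.isChain_iff_getElem.1 hchain i (by omega))
  have hgood0 : Good T p0.support := by
    intro i hi0
    have hiv := i.isLt
    refine ⟨⟨(i:ℕ) - 1, by omega⟩, by show (i:ℕ)-1 < (i:ℕ); omega, ?_⟩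
    have h1 := hchain' ((i:ℕ) - 1) (by omega)
    have he2 : (⟨(i:ℕ)-1+1, by omega⟩ : Fin p0.support.length) = i :=
      Fin.ext (show (i:ℕ)-1+1 = (i:ℕ) by omega)
    rwa [he2] at h1
  obtain ⟨L, hpre, hLnd, hLgood, hLlen⟩ := extend_list T hconn t p0.support
    (by omega) (SimpleGraph.Walk.support_ne_nil _) hL0nodup hgood0
  have hL0le : p0.support.length ≤ L.length := hpre.length_le
  obtain ⟨m, hm2, hmsup⟩ : ∃ m, 2 ≤ m ∧ p0.support.length = m + 1 :=
    ⟨p0.length, hlen2, hL0len⟩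
  have hmt : m + 1 ≤ t := by omega
  have hmlt : m < t := Nat.lt_of_lt_of_le (Nat.lt_succ_self m) hmt
  have h0t : 0 < t := Nat.lt_of_le_of_lt (Nat.zero_le m) hmlt
  have hm1t : m - 1 < t := Nat.lt_of_le_of_lt (Nat.pred_le m) hmlt
  set v : Fin t → Fin t := fun i => L.get (Fin.cast hLlen.symm i) with hv
  have hvinj : Function.Injective v := by
    intro a b hab
    have h2 := List.nodup_iff_injective_get.1 hLnd hab
    have h3 := congrArg Fin.val h2
    exact Fin.ext (by simpa using h3)
  have hvget : ∀ (i : ℕ) (h : i < p0.support.length),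
      v ⟨i, by omega⟩ = p0.support.get ⟨i, h⟩ := by
    intro i h
    show L.get _ = _
    rw [List.get_eq_getElem, List.get_eq_getElem]
    exact (hpre.getElem h).symm
  have hmeq : m = p0.length := by omega
  have hgv : ∀ (i : ℕ) (h : i < p0.support.length), v ⟨i, by omega⟩ = p0.getVert i := by
    intro i h
    show L.get _ = _
    rw [List.get_eq_getElem]
    exact ((hpre.getElem h).symm).trans (support_getElem_eq_getVert p0 i h)
  have hspecial : T.Adj (v ⟨m-1, hm1t⟩) (v ⟨m, hmlt⟩) := by
    have e1 := hgv (m-1) (by omega)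
    have e2 := hgv m (by omega)
    rw [e1, e2]
    have h1 : (T \ fromEdgeSet {s(x,y)}).Adj (p0.getVert (m-1)) (p0.getVert (m-1+1)) :=
      p0.adj_getVert_succ (by omega)
    have h2 : m - 1 + 1 = m := by omega
    rw [h2] at h1
    exact hG'le _ _ h1
  have hends : T.Adj (v ⟨0, h0t⟩) (v ⟨m, hmlt⟩) := by
    have e1 := hgv 0 (by omega)
    have e2 := hgv m (by omega)
    rw [e1, e2]
    have hx : p0.getVert 0 = x := p0.getVert_zero
    have hy : p0.getVert m = y := by rw [hmeq]; exact p0.getVert_length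
    rw [hx, hy]
    exact he
  have hstep : ∀ i : Fin t, (i:ℕ) ≠ 0 → ∃ j : Fin t, (j:ℕ) < (i:ℕ) ∧ T.Adj (v j) (v i) := by
    intro i hi0
    obtain ⟨j, hj, hadj⟩ := hLgood (Fin.cast hLlen.symm i) (by simpa using hi0)
    exact ⟨Fin.cast hLlen j, by simpa using hj, hadj⟩
  set pf : Fin t → Fin t := fun i =>
    if h : (i:ℕ) = m then ⟨m-1, hm1t⟩
    else if h0 : (i:ℕ) ≠ 0 then (hstep i h0).choose else i with hpf
  have hpf_pos : ∀ (i : Fin t), (i:ℕ) = m → pf i = ⟨m-1, hm1t⟩ := by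
    intro i him
    simp only [hpf]
    rw [dif_pos him]
  have hpf_neg : ∀ (i : Fin t) (him : (i:ℕ) ≠ m) (hi0 : (i:ℕ) ≠ 0),
      pf i = (hstep i hi0).choose := by
    intro i him hi0
    simp only [hpf]
    rw [dif_neg him, dif_pos hi0]
  refine ⟨v, pf, ⟨m, hmlt⟩, ⟨0, h0t⟩, hvinj, ?_, ?_, ?_, ?_, ?_⟩
  · intro i hi0
    by_cases him : (i:ℕ) = m
    · rw [hpf_pos i him]
      constructor
      · show m - 1 < (i:ℕ); omega
      · have e3 : i = ⟨m, hmlt⟩ := Fin.ext him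
        subst e3
        exact hspecial
    · rw [hpf_neg i him hi0]
      exact (hstep i hi0).choose_spec
  · show 2 ≤ m; omega
  · show 0 < m; omega
  · rw [hpf_pos ⟨m, hmlt⟩ rfl]
    intro hq
    have h5 := congrArg Fin.val hq
    simp only [] at h5
    omega
  · exact hends


section Encoding

variable {d t : ℕ} {T : SimpleGraph (Fin t)}

/-- the vertex map chosen from an isomorphism -/
noncomputable def gfun (S : Finset (Fin d → Bool))
    (hS : Nonempty (((distTwoGraph d).induce (S : Set (Fin d → Bool))) ≃g T)) :
    Fin t → (Fin d → Bool) :=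
  fun i => ((Classical.choice hS).symm i : {x // x ∈ (S : Set (Fin d → Bool))}).1

lemma gfun_inj (S : Finset (Fin d → Bool))
    (hS : Nonempty (((distTwoGraph d).induce (S : Set (Fin d → Bool))) ≃g T)) :
    Function.Injective (gfun S hS) := by
  intro a b hab
  have h2 : (Classical.choice hS).symm a = (Classical.choice hS).symm b := Subtype.ext hab
  exact (Classical.choice hS).symm.toEquiv.injective h2

lemma gfun_dist (S : Finset (Fin d → Bool))
    (hS : Nonempty (((distTwoGraph d).induce (S : Set (Fin d → Bool))) ≃g T))
    {a b : Fin t} (hab : T.Adj a b) :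
    hammingDist (gfun S hS a) (gfun S hS b) = 2 := by
  have h2 : ((distTwoGraph d).induce (S : Set (Fin d → Bool))).Adj
      ((Classical.choice hS).symm a) ((Classical.choice hS).symm b) :=
    (Classical.choice hS).symm.map_adj_iff.2 hab
  rw [SimpleGraph.comap_adj] at h2
  exact h2

lemma gfun_mem (S : Finset (Fin d → Bool))
    (hS : Nonempty (((distTwoGraph d).induce (S : Set (Fin d → Bool))) ≃g T))
    (i : Fin t) : gfun S hS i ∈ S := by
  exact Finset.mem_coe.1 ((Classical.choice hS).symm i).2

lemma gfun_surj (S : Finset (Fin d → Bool))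
    (hS : Nonempty (((distTwoGraph d).induce (S : Set (Fin d → Bool))) ≃g T))
    {a : Fin d → Bool} (ha : a ∈ S) : ∃ i, gfun S hS i = a := by
  refine ⟨(Classical.choice hS) ⟨a, by simpa using ha⟩, ?_⟩
  simp only [gfun, RelIso.symm_apply_apply]

open scoped Classical in
/-- The full encoding of a defect set. -/
noncomputable def encode (T : SimpleGraph (Fin t)) (v pfun : Fin t → Fin t) (k z : Fin t)
    (q : Fin t) (S : Finset (Fin d → Bool)) :
    (Fin d → Bool) × ({i : Fin t // (i : ℕ) ≠ 0 ∧ i ≠ k} → Option (Fin d × Fin d))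
      × Option (Fin d × Fin 4) :=
  if hS : Nonempty (((distTwoGraph d).induce (S : Set (Fin d → Bool))) ≃g T) then
    (gfun S hS (v z),
     fun i => nCode (gfun S hS (v (pfun i.1))) (gfun S hS (v i.1)),
     sCode (gfun S hS (v (pfun k))) (gfun S hS (v q)) (gfun S hS (v k)))
  else (fun _ => false, fun _ => none, none)

lemma encode_inj (T : SimpleGraph (Fin t)) (v pfun : Fin t → Fin t) (k q z : Fin t)
    (hvinj : Function.Injective v)
    (hstep : ∀ i : Fin t, (i : ℕ) ≠ 0 → (pfun i : ℕ) < (i : ℕ) ∧ T.Adj (v (pfun i)) (v i))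
    (hk2 : 2 ≤ (k : ℕ)) (hqk : (q : ℕ) < (k : ℕ)) (hqpk : q ≠ pfun k)
    (hadjqk : T.Adj (v q) (v k)) (hz : (z : ℕ) = 0)
    (S S' : Finset (Fin d → Bool))
    (hS : Nonempty (((distTwoGraph d).induce (S : Set (Fin d → Bool))) ≃g T))
    (hS' : Nonempty (((distTwoGraph d).induce (S' : Set (Fin d → Bool))) ≃g T))
    (h : encode T v pfun k z q S = encode T v pfun k z q S') : S = S' := by
  classical
  simp only [encode] at h
  rw [dif_pos hS, dif_pos hS'] at h
  have h1 : gfun S hS (v z) = gfun S' hS' (v z) := congrArg Prod.fst h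
  have h23 := congrArg Prod.snd h
  have h2 : (fun (i : {i : Fin t // (i : ℕ) ≠ 0 ∧ i ≠ k}) =>
      nCode (gfun S hS (v (pfun i.1))) (gfun S hS (v i.1)))
      = fun i => nCode (gfun S' hS' (v (pfun i.1))) (gfun S' hS' (v i.1)) :=
    congrArg Prod.fst h23
  have h3 : sCode (gfun S hS (v (pfun k))) (gfun S hS (v q)) (gfun S hS (v k))
      = sCode (gfun S' hS' (v (pfun k))) (gfun S' hS' (v q)) (gfun S' hS' (v k)) :=
    congrArg Prod.snd h23
  have hk0 : (k : ℕ) ≠ 0 := by omega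
  -- main induction: the two vertex maps agree everywhere
  have main : ∀ n : ℕ, ∀ hn : n < t, gfun S hS (v ⟨n, hn⟩) = gfun S' hS' (v ⟨n, hn⟩) := by
    intro n
    induction n using Nat.strong_induction_on with
    | _ n IH =>
      intro hn
      by_cases hn0 : n = 0
      · subst hn0
        have hze : (⟨0, hn⟩ : Fin t) = z := Fin.ext (show (0:ℕ) = (z:ℕ) by omega)
        rw [hze]
        exact h1
      · have hi0 : ((⟨n, hn⟩ : Fin t) : ℕ) ≠ 0 := hn0
        have hnn : ((⟨n, hn⟩ : Fin t) : ℕ) = n := rfl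
        obtain ⟨hplt, hadj⟩ := hstep ⟨n, hn⟩ hi0
        have hpIH : gfun S hS (v (pfun ⟨n, hn⟩)) = gfun S' hS' (v (pfun ⟨n, hn⟩)) := by
          have := IH (pfun ⟨n, hn⟩ : ℕ) (by omega) (pfun ⟨n, hn⟩).isLt
          simpa using this
        by_cases hik : (⟨n, hn⟩ : Fin t) = k
        · -- the special vertex
          have hkn : (k : ℕ) = n := by rw [← hik]
          obtain ⟨hpklt, hadjk⟩ := hstep k hk0
          have hqIH : gfun S hS (v q) = gfun S' hS' (v q) := by
            have := IH (q : ℕ) (by omega) q.isLt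
            simpa using this
          have hpkIH : gfun S hS (v (pfun k)) = gfun S' hS' (v (pfun k)) := by
            rw [← hik]
            exact hpIH
          have huv : gfun S hS (v (pfun k)) ≠ gfun S hS (v q) := by
            intro hc
            exact hqpk (hvinj (gfun_inj S hS hc)).symm
          rw [hik]
          refine sCode_inj huv (gfun_dist S hS hadjk) (gfun_dist S hS hadjqk) ?_ ?_ ?_
          · rw [hpkIH]
            exact gfun_dist S' hS' hadjk
          · rw [hqIH]
            exact gfun_dist S' hS' hadjqk
          · rw [← hpkIH, ← hqIH] at h3
            exact h3
        · -- a normal vertex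
          have h2i := congrFun h2 ⟨⟨n, hn⟩, ⟨hi0, hik⟩⟩
          simp only [] at h2i
          rw [← hpIH] at h2i
          exact nCode_inj (gfun_dist S hS hadj)
            (by rw [hpIH]; exact gfun_dist S' hS' hadj) h2i
  have hvsurj : Function.Surjective v := Finite.surjective_of_injective hvinj
  have hmain' : ∀ i : Fin t, gfun S hS i = gfun S' hS' i := by
    intro i
    obtain ⟨j, rfl⟩ := hvsurj i
    have := main (j : ℕ) j.isLt
    simpa using this
  ext a
  constructor
  · intro ha
    obtain ⟨i, hi⟩ := gfun_surj S hS ha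
    rw [← hi, hmain' i]
    exact gfun_mem S' hS' i
  · intro ha
    obtain ⟨i, hi⟩ := gfun_surj S' hS' ha
    rw [← hi, ← hmain' i]
    exact gfun_mem S hS i

end Encoding

end NontreeAux

/-- For a non-tree defect type `T` on `t` vertices (connected, containing a cycle), the
number of 2-linked `S ⊆ E` of `Q_d` with distance-2 graph isomorphic to `T` is
`O(2^d d^(2t−3))` as `d → ∞`. -/
theorem nontree_defect_type_count (t : ℕ) (T : SimpleGraph (Fin t)) (hconn : T.Connected)
    (hcyc : ¬ T.IsAcyclic) :
    ∃ C : ℝ, 0 < C ∧ ∀ d : ℕ, 1 ≤ d →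
      (Set.ncard {S : Finset (Fin d → Bool) | S ⊆ evenFinset d ∧ TwoLinked d S ∧
          Nonempty (((distTwoGraph d).induce (S : Set (Fin d → Bool))) ≃g T)} : ℝ)
        ≤ C * 2 ^ d * (d : ℝ) ^ (2 * t - 3) := by
  classical
  obtain ⟨v, pfun, k, q, hvinj, hstep, hk2, hqk, hqpk, hadjqk⟩ :=
    NontreeAux.exists_order T hconn hcyc
  have ht3 : 3 ≤ t := by have := k.isLt; omega
  obtain ⟨z0, hz0⟩ : ∃ z : Fin t, (z : ℕ) = 0 := ⟨⟨0, by omega⟩, rfl⟩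
  refine ⟨5 * 2 ^ t, by positivity, ?_⟩
  intro d hd
  set 𝒮 := {S : Finset (Fin d → Bool) | S ⊆ evenFinset d ∧ TwoLinked d S ∧
      Nonempty (((distTwoGraph d).induce (S : Set (Fin d → Bool))) ≃g T)} with h𝒮
  have hinj : Set.InjOn (NontreeAux.encode T v pfun k z0 q) 𝒮 := by
    intro S hS S' hS' h
    exact NontreeAux.encode_inj T v pfun k q z0 hvinj hstep hk2 hqk hqpk hadjqk hz0
      S S' hS.2.2 hS'.2.2 h
  have h1 : 𝒮.ncard ≤ Fintype.card ((Fin d → Bool) ×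
      ({i : Fin t // (i : ℕ) ≠ 0 ∧ i ≠ k} → Option (Fin d × Fin d)) ×
      Option (Fin d × Fin 4)) := by
    rw [← Set.ncard_image_of_injOn hinj]
    have h2 := Set.ncard_le_ncard
      (Set.subset_univ ((NontreeAux.encode T v pfun k z0 q) '' 𝒮)) Set.finite_univ
    rwa [Set.ncard_univ, Nat.card_eq_fintype_card] at h2
  have hk0 : z0 ≠ k := by
    intro hc
    have := congrArg Fin.val hc
    omega
  have hcardI : Fintype.card {i : Fin t // (i : ℕ) ≠ 0 ∧ i ≠ k} = t - 2 := by
    have he1 : ∀ i : Fin t, ((i : ℕ) ≠ 0 ∧ i ≠ k) ↔ ¬(i = z0 ∨ i = k) := by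
      intro i
      rw [not_or]
      constructor
      · rintro ⟨ha, hb⟩
        refine ⟨fun hc => ha (by rw [hc, hz0]), hb⟩
      · rintro ⟨ha, hb⟩
        refine ⟨fun hc => ha (Fin.ext (by omega)), hb⟩
    rw [Fintype.card_congr (Equiv.subtypeEquivRight he1)]
    rw [Fintype.card_subtype_compl]
    have he2 : Fintype.card {i : Fin t // i = z0 ∨ i = k} = 2 := by
      rw [Fintype.card_subtype]
      have he3 : Finset.univ.filter (fun i : Fin t => i = z0 ∨ i = k) = {z0, k} := by
        ext i
        simp [Finset.mem_insert]
      rw [he3, Finset.card_pair hk0]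
    rw [he2, Fintype.card_fin]
  have hcard : Fintype.card ((Fin d → Bool) ×
      ({i : Fin t // (i : ℕ) ≠ 0 ∧ i ≠ k} → Option (Fin d × Fin d)) ×
      Option (Fin d × Fin 4)) = 2 ^ d * ((d * d + 1) ^ (t - 2) * (d * 4 + 1)) := by
    simp only [Fintype.card_prod, Fintype.card_fun, Fintype.card_option, Fintype.card_fin,
      Fintype.card_bool, hcardI]
  have hkey : 2 ^ d * ((d * d + 1) ^ (t - 2) * (d * 4 + 1))
      ≤ (5 * 2 ^ t) * (2 ^ d * d ^ (2 * t - 3)) := by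
    have hdd : 1 ≤ d * d := by
      have := Nat.mul_le_mul hd hd
      omega
    have hb1 : (d * d + 1) ^ (t - 2) ≤ 2 ^ (t - 2) * d ^ (2 * t - 4) := by
      calc (d * d + 1) ^ (t - 2) ≤ (2 * (d * d)) ^ (t - 2) :=
            Nat.pow_le_pow_left (by omega) _
        _ = 2 ^ (t - 2) * (d * d) ^ (t - 2) := mul_pow _ _ _
        _ = 2 ^ (t - 2) * d ^ (2 * (t - 2)) := by rw [← pow_two, ← pow_mul]
        _ = 2 ^ (t - 2) * d ^ (2 * t - 4) := by rw [show 2 * (t - 2) = 2 * t - 4 by omega]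
    have hb2 : d * 4 + 1 ≤ 5 * d := by omega
    calc 2 ^ d * ((d * d + 1) ^ (t - 2) * (d * 4 + 1))
        ≤ 2 ^ d * ((2 ^ (t - 2) * d ^ (2 * t - 4)) * (5 * d)) :=
          Nat.mul_le_mul le_rfl (Nat.mul_le_mul hb1 hb2)
      _ = (5 * 2 ^ (t - 2)) * (2 ^ d * (d ^ (2 * t - 4) * d ^ 1)) := by ring
      _ = (5 * 2 ^ (t - 2)) * (2 ^ d * d ^ (2 * t - 3)) := by
          rw [← pow_add, show 2 * t - 4 + 1 = 2 * t - 3 by omega]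
      _ ≤ (5 * 2 ^ t) * (2 ^ d * d ^ (2 * t - 3)) :=
          Nat.mul_le_mul (Nat.mul_le_mul le_rfl
            (Nat.pow_le_pow_right (by norm_num) (by omega))) le_rfl
  have hfinal : 𝒮.ncard ≤ (5 * 2 ^ t) * (2 ^ d * d ^ (2 * t - 3)) := by
    rw [hcard] at h1
    exact h1.trans hkey
  calc ((𝒮.ncard : ℝ)) ≤ (((5 * 2 ^ t) * (2 ^ d * d ^ (2 * t - 3)) : ℕ) : ℝ) := by
        exact_mod_cast hfinal
    _ = 5 * 2 ^ t * 2 ^ d * (d : ℝ) ^ (2 * t - 3) := by push_cast; ring
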